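/- The map φ_A that sends a Dyck path P = p_1 p_2 ⋯ p_{2n+2} of size n+1 with all peaks at odd height to the word v_1 ⋯ v_n with v_j = U if p_{2j}p_{2j+1} = NN, v_j = H if p_{2j}p_{2j+1} = EN, and v_j = D if p_{2j}p_{2j+1} = EE, is a bijection onto the set of Motzkin paths of length n. -/

import Mathlib

/-- A Dyck path of size `n`: a list of booleans (`true` = north step, `false` = east step)
from `(0,0)` to `(n,n)` staying weakly above the diagonal `y = x`. -/
def IsDyckPath (n : ℕ) (w : List Bool) : Prop :=
  w.length = 2 * n ∧ w.count true = n ∧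
    ∀ k, (w.take k).count false ≤ (w.take k).count true

/-- The `y`-coordinate of the lattice point reached after `k` steps. -/
def ycoord (w : List Bool) (k : ℕ) : ℕ := (w.take k).count true

/-- The `x`-coordinate of the lattice point reached after `k` steps. -/
def xcoord (w : List Bool) (k : ℕ) : ℕ := (w.take k).count false

/-- A peak: a north step at position `i` followed by an east step. -/
def IsPeak (w : List Bool) (i : ℕ) : Prop := w[i]? = some true ∧ w[i+1]? = some false

/-- A valley: an east step at position `i` followed by a north step. -/
def IsValley (w : List Bool) (i : ℕ) : Prop := w[i]? = some false ∧ w[i+1]? = some true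

/-- Height above the diagonal after `k` steps. -/
def pdepth (w : List Bool) (k : ℕ) : ℤ := (ycoord w k : ℤ) - (xcoord w k : ℤ)

/-- Step `i` (a north step) of `w` is matched with step `j` (an east step):
the facing east step at the same height (balanced-parentheses matching). -/
def Matches (w : List Bool) (i j : ℕ) : Prop :=
  i < j ∧ w[i]? = some true ∧ w[j]? = some false ∧
    pdepth w (j + 1) = pdepth w i ∧ ∀ k, i < k → k ≤ j → pdepth w i < pdepth w k

/-- The graph on `m` points whose edges are the upper arches and the lower arches;
its connected components are the components of the corresponding meander. -/
def meanderGraph (m : ℕ) (upper lower : ℕ → ℕ → Prop) : SimpleGraph (Fin m) where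
  Adj i j := i ≠ j ∧ (upper i.1 j.1 ∨ upper j.1 i.1 ∨ lower i.1 j.1 ∨ lower j.1 i.1)
  symm := by
    constructor
    intro i j h
    exact ⟨h.1.symm, by tauto⟩
  loopless := by
    constructor
    intro i h
    exact h.1 rfl

/-- The number of components of the meander with the matching of `P` above and the
matching of `Q` below. -/
noncomputable def trajPQ (n : ℕ) (P Q : List Bool) : ℕ :=
  Nat.card (meanderGraph (2 * n) (Matches P) (Matches Q)).ConnectedComponent

/-- The number of components of the meander with the matching of `P` above and the
rainbow matching `i ↦ 2n - 1 - i` below. -/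
noncomputable def traj (n : ℕ) (P : List Bool) : ℕ :=
  Nat.card (meanderGraph (2 * n) (Matches P)
    (fun i j => i + j + 1 = 2 * n)).ConnectedComponent

/-- No peak with even `y`-coordinate and no valley with odd `x`-coordinate. -/
def NoBadCorner (w : List Bool) : Prop :=
  (∀ i, IsPeak w i → Odd (ycoord w (i + 1))) ∧
  (∀ i, IsValley w i → Even (xcoord w (i + 1)))

/-- A bad corner: a peak with even `y`-coordinate or a valley with odd `x`-coordinate. -/
def IsBadCorner (w : List Bool) (i : ℕ) : Prop :=
  (IsPeak w i ∧ Even (ycoord w (i + 1))) ∨ (IsValley w i ∧ Odd (xcoord w (i + 1)))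

/-- Interchange the two steps of the corner at positions `i`, `i+1`. -/
def swapCorner (w : List Bool) (i : ℕ) : List Bool :=
  (w.set i (w.getD (i + 1) true)).set (i + 1) (w.getD i true)

open Classical in
/-- The involution `φ`: swap the two steps of the first bad corner, if any. -/
noncomputable def phiMap (w : List Bool) : List Bool :=
  if h : ∃ i, IsBadCorner w i then swapCorner w (Nat.find h) else w

/-- The number of unit squares between a Dyck path and the diagonal `y = x`. -/
def area (w : List Bool) : ℕ :=
  ((List.range w.length).map fun i =>
    if w.getD i true then 0 else ycoord w i - xcoord w i - 1).sum

/-- The zigzag Dyck path `(NE)^m`. -/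
def zigzag (m : ℕ) : List Bool := (List.replicate m [true, false]).flatten

/-- `N^{2a_1} E^{2b_1} ⋯ N^{2a_t} E^{2b_t}` for `ab = [(a_1,b_1),…,(a_t,b_t)]`. -/
def doubledWord (ab : List (ℕ × ℕ)) : List Bool :=
  (ab.map fun p => List.replicate (2 * p.1) true ++ List.replicate (2 * p.2) false).flatten

/-- `N^{a_1} E^{b_1} ⋯ N^{a_t} E^{b_t}` for `ab = [(a_1,b_1),…,(a_t,b_t)]`. -/
def halfWord (ab : List (ℕ × ℕ)) : List Bool :=
  (ab.map fun p => List.replicate p.1 true ++ List.replicate p.2 false).flatten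

/-- All peaks at odd height (`height` = `y - x` at the peak's lattice point). -/
def AllPeaksOdd (w : List Bool) : Prop :=
  ∀ i, IsPeak w i → Odd (ycoord w (i + 1) - xcoord w (i + 1))

/-- All peaks at even height. -/
def AllPeaksEven (w : List Bool) : Prop :=
  ∀ i, IsPeak w i → Even (ycoord w (i + 1) - xcoord w (i + 1))

/-- Steps of a Motzkin path: up, horizontal, down. -/
inductive MStep | U | H | D
deriving DecidableEq

/-- The total height change along a list of Motzkin steps. -/
def msum (l : List MStep) : ℤ :=
  (l.map fun s => match s with | MStep.U => 1 | MStep.H => 0 | MStep.D => -1).sum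

/-- A Motzkin path of length `n`. -/
def IsMotzkin (n : ℕ) (l : List MStep) : Prop :=
  l.length = n ∧ msum l = 0 ∧ ∀ k, 0 ≤ msum (l.take k)

/-- A Riordan path of length `n`: a Motzkin path with no horizontal step on the `x`-axis. -/
def IsRiordan (n : ℕ) (l : List MStep) : Prop :=
  IsMotzkin n l ∧ ∀ i, l[i]? = some MStep.H → msum (l.take i) ≠ 0

/-- The map `φ_A` from Dyck paths of size `n+1` (all peaks at odd height)
to Motzkin paths of length `n`: `v_j` is read off from steps `p_{2j} p_{2j+1}`. -/
def phiA (n : ℕ) (P : List Bool) : List MStep :=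
  (List.range n).map fun j =>
    match P.getD (2 * j + 1) true, P.getD (2 * j + 2) true with
    | true, true => MStep.U
    | false, true => MStep.H
    | _, _ => MStep.D

/-- The map `φ_B` from Dyck paths of size `n` (all peaks at even height)
to Riordan paths of length `n`: `u_j` is read off from steps `p_{2j-1} p_{2j}`. -/
def phiB (n : ℕ) (P : List Bool) : List MStep :=
  (List.range n).map fun j =>
    match P.getD (2 * j) true, P.getD (2 * j + 1) true with
    | true, true => MStep.U
    | false, true => MStep.H
    | _, _ => MStep.D

/-!
The height `y - x` after `k` steps has the parity of `k`, so a peak at odd height has its `N`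
step at an odd position and no pair `p_{2j} p_{2j+1}` is `NE`. As `P` starts with `N` and ends
with `E`, it is `N v̂ E`, where `v̂` spells `v = φ_A(P)` by `U ↦ NN`, `H ↦ EN`, `D ↦ EE`.
Conversely, for any Motzkin word `v` the height of `N v̂ E` after `2j + 1` steps is
`1 + 2 · (height of v after j steps)`, and the heights after an even number of steps lie within
one of these; this turns the Motzkin condition on `v` into the Dyck condition on `N v̂ E`.
-/

namespace MStep

def rise : MStep → ℤ
  | U => 1
  | H => 0
  | D => -1

def toPair : MStep → List Bool
  | U => [true, true]
  | H => [false, true]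
  | D => [false, false]

def ofPair : Bool → Bool → MStep
  | true, true => U
  | false, true => H
  | _, _ => D

theorem toPair_ofPair {a b : Bool} (h : ¬(a = true ∧ b = false)) :
    (ofPair a b).toPair = [a, b] := by
  cases a <;> cases b <;> simp_all [ofPair, toPair]

@[simp] theorem length_toPair (s : MStep) : s.toPair.length = 2 := by
  cases s <;> rfl

theorem length_flatMap_toPair (l : List MStep) :
    (l.flatMap toPair).length = 2 * l.length := by
  simp [List.length_flatMap, mul_comm]

theorem take_flatMap_toPair (l : List MStep) (k : ℕ) :
    (l.flatMap toPair).take (2 * k) = (l.take k).flatMap toPair := by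
  induction l generalizing k with
  | nil => simp
  | cons s l ih =>
    cases k with
    | zero => simp
    | succ k => cases s <;> simp [toPair, Nat.mul_succ, ih]

end MStep

open MStep

@[simp] theorem msum_cons (s : MStep) (l : List MStep) : msum (s :: l) = s.rise + msum l := by
  cases s <;> simp [msum, rise]

theorem msum_take_eq_min (l : List MStep) (k : ℕ) :
    msum (l.take k) = msum (l.take (min k l.length)) := by
  rw [← List.take_eq_take_min]

def wordHeight (w : List Bool) : ℤ := (w.count true : ℤ) - w.count false

@[simp] theorem wordHeight_nil : wordHeight [] = 0 := rfl

@[simp] theorem wordHeight_cons (b : Bool) (w : List Bool) :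
    wordHeight (b :: w) = (if b then 1 else -1) + wordHeight w := by
  cases b <;> simp [wordHeight] <;> ring

@[simp] theorem wordHeight_append (u v : List Bool) :
    wordHeight (u ++ v) = wordHeight u + wordHeight v := by
  simp only [wordHeight, List.count_append]; push_cast; ring

theorem wordHeight_flatMap_toPair (l : List MStep) :
    wordHeight (l.flatMap toPair) = 2 * msum l := by
  induction l with
  | nil => rfl
  | cons s l ih => cases s <;> simp [toPair, rise, ih] <;> ring

theorem wordHeight_take_succ_ge (w : List Bool) (k : ℕ) :
    wordHeight (w.take k) - 1 ≤ wordHeight (w.take (k + 1)) := by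
  rw [List.take_add_one]
  rcases w[k]? with _ | _ | _ <;> simp; omega

theorem isDyckPath_iff {n : ℕ} {w : List Bool} :
    IsDyckPath n w ↔
      w.length = 2 * n ∧ wordHeight w = 0 ∧ ∀ k, 0 ≤ wordHeight (w.take k) := by
  have hcount := List.count_true_add_count_false w
  have hprefix (k : ℕ) : (w.take k).count false ≤ (w.take k).count true ↔
      0 ≤ wordHeight (w.take k) := by
    simp only [wordHeight]; omega
  simp only [IsDyckPath, hprefix, wordHeight]
  constructor <;> rintro ⟨hlen, hh, hk⟩ <;> exact ⟨hlen, by omega, hk⟩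

theorem IsDyckPath.exists_eq_true_cons_append_false {n : ℕ} {P : List Bool}
    (h : IsDyckPath (n + 1) P) :
    ∃ Q : List Bool, Q.length = 2 * n ∧ P = true :: (Q ++ [false]) := by
  obtain ⟨hlen, hzero, hprefix⟩ := isDyckPath_iff.1 h
  obtain _ | ⟨a, R⟩ := P
  · simp at hlen
  obtain rfl | ⟨Q, b, rfl⟩ := R.eq_nil_or_concat
  · simp at hlen; omega
  rw [List.concat_eq_append] at hprefix hzero hlen
  have ha : a = true := by
    have h1 := hprefix 1
    cases a <;> simp at h1 ⊢
  have hb : b = false := by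
    have h1 := hprefix (Q.length + 1)
    rw [List.take_succ_cons, List.take_left' rfl] at h1
    cases b <;> simp at hzero h1 ⊢; omega
  exact ⟨Q, by simp at hlen; omega, by simp [ha, hb]⟩

theorem IsPeak.cons_succ {b : Bool} {w : List Bool} {i : ℕ} :
    IsPeak (b :: w) (i + 1) ↔ IsPeak w i := by
  simp [IsPeak]

theorem ycoord_add_xcoord {w : List Bool} {k : ℕ} (hk : k ≤ w.length) :
    ycoord w k + xcoord w k = k := by
  simp [ycoord, xcoord, List.count_true_add_count_false, hk]

theorem allPeaksOdd_iff {w : List Bool} (hw : ∀ k, xcoord w k ≤ ycoord w k) :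
    AllPeaksOdd w ↔ ∀ i, IsPeak w i → Even i := by
  refine forall_congr' fun i => imp_congr_right fun hpeak => ?_
  have hi : i + 1 ≤ w.length := by
    by_contra hi
    simp [IsPeak, List.getElem?_eq_none (by omega : w.length ≤ i + 1)] at hpeak
  rw [Nat.odd_sub (hw _), ← Nat.odd_add, ycoord_add_xcoord hi, Nat.odd_add_one,
    Nat.not_odd_iff_even]

def motzkinToDyck (l : List MStep) : List Bool := true :: (l.flatMap toPair ++ [false])

@[simp] theorem length_motzkinToDyck (l : List MStep) :
    (motzkinToDyck l).length = 2 * l.length + 2 := by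
  simp only [motzkinToDyck, List.length_cons, List.length_append, length_flatMap_toPair,
    List.length_nil]

theorem wordHeight_motzkinToDyck (l : List MStep) :
    wordHeight (motzkinToDyck l) = 2 * msum l := by
  simp [motzkinToDyck, wordHeight_flatMap_toPair]

theorem wordHeight_take_odd_motzkinToDyck {l : List MStep} {k : ℕ} (hk : k ≤ l.length) :
    wordHeight ((motzkinToDyck l).take (2 * k + 1)) = 1 + 2 * msum (l.take k) := by
  rw [motzkinToDyck, List.take_succ_cons,
    List.take_append_of_le_length (by rw [length_flatMap_toPair]; omega), take_flatMap_toPair,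
    wordHeight_cons, wordHeight_flatMap_toPair, if_pos rfl]

theorem wordHeight_take_motzkinToDyck_nonneg_iff {l : List MStep} :
    (∀ k, 0 ≤ wordHeight ((motzkinToDyck l).take k)) ↔ ∀ k, 0 ≤ msum (l.take k) := by
  constructor
  · intro h k
    rw [msum_take_eq_min]
    have := wordHeight_take_odd_motzkinToDyck (min_le_right k l.length)
    have := h (2 * min k l.length + 1)
    omega
  · intro h m
    have hodd {k : ℕ} (hk : k ≤ l.length) :
        1 ≤ wordHeight ((motzkinToDyck l).take (2 * k + 1)) := by
      have := h k
      rw [wordHeight_take_odd_motzkinToDyck hk]; omega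
    rw [List.take_eq_take_min, length_motzkinToDyck]
    obtain ⟨k, hm | hm⟩ := Nat.even_or_odd' (min m (2 * l.length + 2))
    · obtain _ | k := k
      · simp [hm]
      · have := wordHeight_take_succ_ge (motzkinToDyck l) (2 * k + 1)
        have := hodd (k := k) (by omega)
        rw [hm, show 2 * (k + 1) = 2 * k + 1 + 1 by ring]; omega
    · have := hodd (k := k) (by omega)
      rw [hm]; omega

theorem isDyckPath_motzkinToDyck_iff {n : ℕ} {l : List MStep} :
    IsDyckPath (n + 1) (motzkinToDyck l) ↔ IsMotzkin n l := by
  rw [isDyckPath_iff, wordHeight_motzkinToDyck, wordHeight_take_motzkinToDyck_nonneg_iff,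
    length_motzkinToDyck, IsMotzkin]
  constructor <;> rintro ⟨hlen, hh, hk⟩ <;> exact ⟨by omega, by omega, hk⟩

theorem not_isPeak_flatMap_toPair_append_false (l : List MStep) (j : ℕ) :
    ¬IsPeak (l.flatMap toPair ++ [false]) (2 * j) := by
  induction l generalizing j with
  | nil => obtain _ | j := j <;> simp [IsPeak]
  | cons s l ih =>
    obtain _ | j := j
    · cases s <;> simp [IsPeak, toPair]
    · rw [show 2 * (j + 1) = 2 * j + 1 + 1 by ring]
      cases s <;> simpa [toPair, IsPeak.cons_succ] using ih j

theorem allPeaksOdd_motzkinToDyck {n : ℕ} {l : List MStep} (h : IsMotzkin n l) :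
    AllPeaksOdd (motzkinToDyck l) := by
  refine (allPeaksOdd_iff (isDyckPath_motzkinToDyck_iff.2 h).2.2).2 fun i hpeak => ?_
  obtain _ | i := i
  · exact ⟨0, rfl⟩
  obtain ⟨j, rfl | rfl⟩ := Nat.even_or_odd' i
  · exact absurd (IsPeak.cons_succ.1 hpeak) (not_isPeak_flatMap_toPair_append_false l j)
  · exact ⟨j + 1, by ring⟩

theorem phiA_eq_map_ofPair (n : ℕ) (P : List Bool) :
    phiA n P =
      (List.range n).map fun j => ofPair (P.getD (2 * j + 1) true) (P.getD (2 * j + 2) true) :=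
  rfl

theorem phiA_succ (n : ℕ) (P : List Bool) :
    phiA (n + 1) P = ofPair (P.getD 1 true) (P.getD 2 true) :: phiA n (P.drop 2) := by
  simp only [phiA_eq_map_ofPair, List.range_succ_eq_map, List.map_cons, List.map_map,
    List.getD_eq_getElem?_getD, List.getElem?_drop]
  congr 2
  ext j
  simp only [Function.comp_apply, Nat.succ_eq_add_one]
  ring_nf

theorem phiA_cons_flatMap_toPair_append (c : Bool) (l : List MStep) (t : List Bool) :
    phiA l.length (c :: (l.flatMap toPair ++ t)) = l := by
  induction l generalizing c with
  | nil => rfl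
  | cons s l ih => cases s <;> simp [phiA_succ, toPair, ofPair, ih]

theorem phiA_motzkinToDyck {n : ℕ} {l : List MStep} (h : l.length = n) :
    phiA n (motzkinToDyck l) = l :=
  h ▸ phiA_cons_flatMap_toPair_append true l [false]

theorem flatMap_toPair_phiA_cons {n : ℕ} {c : Bool} {R : List Bool} (hR : 2 * n ≤ R.length)
    (hpeak : ∀ j, ¬IsPeak R (2 * j)) : (phiA n (c :: R)).flatMap toPair = R.take (2 * n) := by
  induction n generalizing c R with
  | zero => rfl
  | succ n ih =>
    rcases R with _ | ⟨a, _ | ⟨b, R⟩⟩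
    · simp at hR
    · simp at hR; omega
    have hab : ¬(a = true ∧ b = false) := by simpa [IsPeak] using hpeak 0
    have hR' : ∀ j, ¬IsPeak R (2 * j) := fun j => by
      simpa [Nat.mul_succ, IsPeak.cons_succ] using hpeak (j + 1)
    rw [phiA_succ]
    simp [toPair_ofPair hab, Nat.mul_succ, ih (by simp at hR ⊢; omega) hR']

theorem motzkinToDyck_phiA {n : ℕ} {P : List Bool} (hD : IsDyckPath (n + 1) P)
    (hO : AllPeaksOdd P) : motzkinToDyck (phiA n P) = P := by
  obtain ⟨Q, hQ, rfl⟩ := hD.exists_eq_true_cons_append_false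
  have hpeak (j : ℕ) : ¬IsPeak (Q ++ [false]) (2 * j) := fun h =>
    Nat.not_even_two_mul_add_one j ((allPeaksOdd_iff hD.2.2).1 hO _ (IsPeak.cons_succ.2 h))
  rw [motzkinToDyck, flatMap_toPair_phiA_cons (by simp; omega) hpeak, List.take_left' hQ]

theorem isMotzkin_phiA {n : ℕ} {P : List Bool} (hD : IsDyckPath (n + 1) P)
    (hO : AllPeaksOdd P) : IsMotzkin n (phiA n P) := by
  rw [← isDyckPath_motzkinToDyck_iff, motzkinToDyck_phiA hD hO]
  exact hD

/-- `φ_A` is a bijection from Dyck paths of size `n+1` with all peaks at odd height onto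
Motzkin paths of length `n`. -/
theorem phiA_bijection (n : ℕ) :
    ∃ e : {P : List Bool // IsDyckPath (n + 1) P ∧ AllPeaksOdd P} ≃
          {l : List MStep // IsMotzkin n l},
      ∀ P, (e P : List MStep) = phiA n P.1 :=
  ⟨{ toFun := fun P => ⟨phiA n P.1, isMotzkin_phiA P.2.1 P.2.2⟩
     invFun := fun l => ⟨motzkinToDyck l.1, isDyckPath_motzkinToDyck_iff.2 l.2,
       allPeaksOdd_motzkinToDyck l.2⟩
     left_inv := fun P => Subtype.ext (motzkinToDyck_phiA P.2.1 P.2.2)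
     right_inv := fun l => Subtype.ext (phiA_motzkinToDyck l.2.1) },
    fun _ => rfl⟩
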